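/- arXiv:1807.01056 — 4 statements merged into one kernel-verified Lean document; each statement's English description precedes it below -/
import Mathlib

section
/- The polynomial g[2] = g(x₁², x₂², x₃², x₄²) is invariant under the action of the group W₂ on ℂ[x₁,x₂,x₃,x₄], i.e. g[2](s·(x₁,x₂,x₃,x₄)) = g[2](x₁,x₂,x₃,x₄) for every s ∈ W₂ (equivalently, for each of the three generators s₁′, s₂′, s₃′). -/
open MvPolynomial

noncomputable section

abbrev Mat4 := Matrix (Fin 4) (Fin 4) ℂ

/-- Action of a matrix on polynomials by linear substitution of variables:
`(matAct M f)(x) = f(M x)`. -/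
def matAct (M : Mat4) (f : MvPolynomial (Fin 4) ℂ) : MvPolynomial (Fin 4) ℂ :=
  aeval (fun i => ∑ j, C (M i j) * X j) f

def s1 : Mat4 := !![0,1,0,0; 1,0,0,0; 0,0,1,0; 0,0,0,-1]
def s2 : Mat4 := !![1,0,0,0; 0,0,1,0; 0,1,0,0; 0,0,0,-1]
def s3 : Mat4 := !![-1,0,0,0; 0,1,0,0; 0,0,0,1; 0,0,1,0]

/-- The subgroup `W₁` of `GL₄(ℂ)` generated by `s₁, s₂, s₃`. -/
def W1 : Subgroup (Matrix.GeneralLinearGroup (Fin 4) ℂ) :=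
  Subgroup.closure {w | (w : Mat4) ∈ ({s1, s2, s3} : Set Mat4)}

/-- The monomial `x₁^{l₁} x₂^{l₂} x₃^{l₃} x₄^{l₄}`. -/
def mono (l : Fin 4 → ℕ) : MvPolynomial (Fin 4) ℂ :=
  monomial (Finsupp.equivFunOnFinite.symm l) 1

/-- `m_λ⁻`: the sum of the elements of the `W₁`-orbit of the monomial `x^λ`. -/
def mneg (l : Fin 4 → ℕ) : MvPolynomial (Fin 4) ℂ :=
  ∑ᶠ P ∈ {P | ∃ w ∈ W1, P = matAct (w : Mat4) (mono l)}, P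

/-- The polynomial `g` of Bonnafé. -/
def g : MvPolynomial (Fin 4) ℂ :=
  mneg ![8,0,0,0] - 6 * mneg ![6,2,0,0] - 60 * mneg ![6,1,1,0] + 2240 * mneg ![5,2,1,0]
    - 14 * mneg ![4,4,0,0] + 10180 * mneg ![4,3,1,0] + 40412 * mneg ![4,2,2,0]
    - 23440 * mneg ![4,2,1,1] + 111980 * mneg ![3,3,2,0] + 154704 * mneg ![2,2,2,2]

/-- Substitution `xᵢ ↦ xᵢᵏ`, giving `f[k]`. -/
def pow (k : ℕ) (f : MvPolynomial (Fin 4) ℂ) : MvPolynomial (Fin 4) ℂ :=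
  aeval (fun i => (X i : MvPolynomial (Fin 4) ℂ) ^ k) f

/-- The set of singular points of the projective hypersurface `Z(f) ⊆ ℙ³(ℂ)`. -/
def SingPts (f : MvPolynomial (Fin 4) ℂ) : Set (Projectivization ℂ (Fin 4 → ℂ)) :=
  {x | eval x.rep f = 0 ∧ ∀ i, eval x.rep (pderiv i f) = 0}

/-- `ζ₄ = i`, a primitive fourth root of unity. -/
def zeta4 : ℂ := Complex.I

def s1' : Mat4 := !![0,1,0,0; 1,0,0,0; 0,0,1,0; 0,0,0,zeta4]
def s2' : Mat4 := !![1,0,0,0; 0,0,1,0; 0,1,0,0; 0,0,0,zeta4]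
def s3' : Mat4 := !![-zeta4,0,0,0; 0,1,0,0; 0,0,0,1; 0,0,1,0]

/-- The subgroup `W₂` of `GL₄(ℂ)` generated by `s₁', s₂', s₃'`. -/
def W2 : Subgroup (Matrix.GeneralLinearGroup (Fin 4) ℂ) :=
  Subgroup.closure {w | (w : Mat4) ∈ ({s1', s2', s3'} : Set Mat4)}

-- ===== auxiliary lemmas =====

lemma aeval_aeval' (h g : Fin 4 → MvPolynomial (Fin 4) ℂ) (p : MvPolynomial (Fin 4) ℂ) :
    aeval h (aeval g p) = aeval (fun i => aeval h (g i)) p := by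
  rw [← AlgHom.comp_apply, comp_aeval]

lemma matAct_matAct (M N : Mat4) (f : MvPolynomial (Fin 4) ℂ) :
    matAct N (matAct M f) = matAct (M * N) f := by
  simp only [matAct]
  rw [aeval_aeval']
  have hfun : (fun i => aeval (fun i => ∑ j, C (N i j) * X j) (∑ j, C (M i j) * X j))
      = fun i => ∑ j, C ((M * N) i j) * (X j : MvPolynomial (Fin 4) ℂ) := by
    funext i
    simp only [map_sum, map_mul, aeval_C, aeval_X, algebraMap_eq, Matrix.mul_apply,
      Finset.mul_sum, Finset.sum_mul, C_mul, mul_assoc]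
    exact Finset.sum_comm
  rw [hfun]

lemma matAct_one (f : MvPolynomial (Fin 4) ℂ) : matAct 1 f = f := by
  have h : (fun i => ∑ j, C ((1 : Mat4) i j) * X j) = (X : Fin 4 → MvPolynomial (Fin 4) ℂ) := by
    funext i
    rw [Finset.sum_eq_single i]
    · simp [Matrix.one_apply]
    · intro j _ hj; simp [Matrix.one_apply, Ne.symm hj]
    · simp
  rw [matAct, h, aeval_X_left_apply]

lemma matAct_C (M : Mat4) (c : ℂ) : matAct M (C c) = C c := by
  simp [matAct, algebraMap_eq]

lemma matAct_mul' (M : Mat4) (a b : MvPolynomial (Fin 4) ℂ) :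
    matAct M (a * b) = matAct M a * matAct M b := map_mul (aeval _) a b

lemma matAct_add' (M : Mat4) (a b : MvPolynomial (Fin 4) ℂ) :
    matAct M (a + b) = matAct M a + matAct M b := map_add (aeval _) a b

lemma matAct_sub' (M : Mat4) (a b : MvPolynomial (Fin 4) ℂ) :
    matAct M (a - b) = matAct M a - matAct M b := map_sub (aeval _) a b

lemma matAct_inv_cancel (u : Matrix.GeneralLinearGroup (Fin 4) ℂ) (f : MvPolynomial (Fin 4) ℂ) :
    matAct (↑u⁻¹ : Mat4) (matAct (u : Mat4) f) = f := by
  rw [matAct_matAct, show ((u : Mat4) * (↑u⁻¹ : Mat4)) = 1 by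
    rw [← Matrix.GeneralLinearGroup.coe_mul, mul_inv_cancel]; rfl, matAct_one]

lemma mono_eq_prod (d : Fin 4 → ℕ) : mono d = ∏ i, (X i : MvPolynomial (Fin 4) ℂ) ^ d i := by
  rw [mono, monomial_eq, C_1, one_mul, Finsupp.prod_fintype]
  · simp
  · intro i; exact pow_zero _

lemma matAct_monomialMat (σ : Equiv.Perm (Fin 4)) (ε : Fin 4 → ℂ) (M : Mat4)
    (hM : ∀ i j, M i j = if j = σ i then ε i else 0) (d : Fin 4 → ℕ) :
    matAct M (mono d) = C (∏ i, ε i ^ d i) * mono (d ∘ σ.symm) := by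
  have hφ : ∀ i, (∑ j, C (M i j) * X j : MvPolynomial (Fin 4) ℂ) = C (ε i) * X (σ i) := by
    intro i
    rw [Finset.sum_eq_single (σ i)]
    · rw [hM]; simp
    · intro j _ hj; rw [hM]; simp [hj]
    · simp
  rw [matAct, mono_eq_prod, map_prod]
  simp only [map_pow, aeval_X, hφ]
  rw [Finset.prod_congr rfl (fun i _ => mul_pow (C (ε i)) (X (σ i)) (d i)),
    Finset.prod_mul_distrib]
  congr 1
  · simp [map_prod, map_pow]
  · rw [mono_eq_prod]
    calc ∏ i, (X (σ i) : MvPolynomial (Fin 4) ℂ) ^ d i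
        = ∏ i, (fun j => (X j : MvPolynomial (Fin 4) ℂ) ^ d (σ.symm j)) (σ i) := by simp
      _ = ∏ j, (X j : MvPolynomial (Fin 4) ℂ) ^ d (σ.symm j) := Equiv.prod_comp σ (fun j => (X j : MvPolynomial (Fin 4) ℂ) ^ d (σ.symm j))
      _ = ∏ j, (X j : MvPolynomial (Fin 4) ℂ) ^ (d ∘ σ.symm) j := rfl

lemma hs1mat : ∀ i j, s1 i j = if j = Equiv.swap (0 : Fin 4) 1 i then (![1,1,1,-1] : Fin 4 → ℂ) i else 0 := by
  intro i j; fin_cases i <;> fin_cases j <;>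
    simp [s1, Equiv.swap_apply_def, Matrix.vecHead, Matrix.vecTail] <;> norm_num

lemma hs2mat : ∀ i j, s2 i j = if j = Equiv.swap (1 : Fin 4) 2 i then (![1,1,1,-1] : Fin 4 → ℂ) i else 0 := by
  intro i j; fin_cases i <;> fin_cases j <;>
    simp [s2, Equiv.swap_apply_def, Matrix.vecHead, Matrix.vecTail] <;> norm_num

lemma hs3mat : ∀ i j, s3 i j = if j = Equiv.swap (2 : Fin 4) 3 i then (![-1,1,1,1] : Fin 4 → ℂ) i else 0 := by
  intro i j; fin_cases i <;> fin_cases j <;>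
    simp [s3, Equiv.swap_apply_def, Matrix.vecHead, Matrix.vecTail] <;> norm_num

lemma key : ∀ w ∈ W1, ∃ σ : Equiv.Perm (Fin 4),
    ∀ d : Fin 4 → ℕ, ∃ c : ℂ, (c = 1 ∨ c = -1) ∧
      matAct (w : Mat4) (mono d) = C c * mono (d ∘ σ) := by
  intro w hw
  induction hw using Subgroup.closure_induction with
  | mem w hw =>
    simp only [Set.mem_setOf_eq, Set.mem_insert_iff, Set.mem_singleton_iff] at hw
    rcases hw with h | h | h
    · refine ⟨Equiv.swap (0 : Fin 4) 1, fun d => ⟨(-1) ^ d 3, neg_one_pow_eq_or ℂ _, ?_⟩⟩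
      rw [h, matAct_monomialMat (Equiv.swap 0 1) ![1,1,1,-1] s1 hs1mat]
      simp [Fin.prod_univ_four]
    · refine ⟨Equiv.swap (1 : Fin 4) 2, fun d => ⟨(-1) ^ d 3, neg_one_pow_eq_or ℂ _, ?_⟩⟩
      rw [h, matAct_monomialMat (Equiv.swap 1 2) ![1,1,1,-1] s2 hs2mat]
      simp [Fin.prod_univ_four]
    · refine ⟨Equiv.swap (2 : Fin 4) 3, fun d => ⟨(-1) ^ d 0, neg_one_pow_eq_or ℂ _, ?_⟩⟩
      rw [h, matAct_monomialMat (Equiv.swap 2 3) ![-1,1,1,1] s3 hs3mat]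
      simp [Fin.prod_univ_four]
  | one =>
    exact ⟨1, fun d => ⟨1, Or.inl rfl, by simp [matAct_one]⟩⟩
  | mul u v hu hv ihu ihv =>
    obtain ⟨σ, hσ⟩ := ihu
    obtain ⟨τ, hτ⟩ := ihv
    refine ⟨τ.trans σ, fun d => ?_⟩
    obtain ⟨c, hc, h1⟩ := hσ d
    obtain ⟨c', hc', h2⟩ := hτ (d ∘ σ)
    refine ⟨c * c', ?_, ?_⟩
    · rcases hc with rfl | rfl <;> rcases hc' with rfl | rfl <;> norm_num
    · rw [Matrix.GeneralLinearGroup.coe_mul, ← matAct_matAct, h1, matAct_mul', matAct_C, h2,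
        C_mul, mul_assoc, Equiv.coe_trans]
      rfl
  | inv u hu ihu =>
    obtain ⟨σ, hσ⟩ := ihu
    refine ⟨σ.symm, fun d => ?_⟩
    obtain ⟨c, hc, h1⟩ := hσ (d ∘ σ.symm)
    have h2 : (d ∘ σ.symm) ∘ σ = d := by funext j; simp [Function.comp]
    rw [h2] at h1
    have h3 := congrArg (matAct (↑u⁻¹ : Mat4)) h1
    rw [matAct_inv_cancel, matAct_mul', matAct_C] at h3
    refine ⟨c, hc, ?_⟩
    have hcc : (C c * C c : MvPolynomial (Fin 4) ℂ) = 1 := by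
      rcases hc with rfl | rfl <;> simp
    calc matAct (↑u⁻¹ : Mat4) (mono d)
        = C c * C c * matAct (↑u⁻¹ : Mat4) (mono d) := by rw [hcc, one_mul]
      _ = C c * (C c * matAct (↑u⁻¹ : Mat4) (mono d)) := by ring
      _ = C c * mono (d ∘ σ.symm) := by rw [← h3]

lemma orbit_finite (l : Fin 4 → ℕ) :
    {P : MvPolynomial (Fin 4) ℂ | ∃ w ∈ W1, P = matAct (w : Mat4) (mono l)}.Finite := by
  apply Set.Finite.subset
    (Set.Finite.image (fun p : ℂ × Equiv.Perm (Fin 4) => C p.1 * mono (l ∘ p.2))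
      (Set.Finite.prod (Set.Finite.insert 1 (Set.finite_singleton (-1))) Set.finite_univ))
  rintro P ⟨w, hw, rfl⟩
  obtain ⟨σ, hσ⟩ := key w hw
  obtain ⟨c, hc, heq⟩ := hσ l
  exact ⟨(c, σ), ⟨by rcases hc with rfl | rfl <;> simp, Set.mem_univ _⟩, heq.symm⟩

lemma matAct_mneg (w : Matrix.GeneralLinearGroup (Fin 4) ℂ) (hw : w ∈ W1) (l : Fin 4 → ℕ) :
    matAct (w : Mat4) (mneg l) = mneg l := by
  classical
  have hS := orbit_finite l
  have h1 : mneg l = ∑ P ∈ hS.toFinset, P := finsum_mem_eq_finite_toFinset_sum _ hS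
  rw [h1, show matAct (w : Mat4) (∑ P ∈ hS.toFinset, P)
      = ∑ P ∈ hS.toFinset, matAct (w : Mat4) P from map_sum (aeval _) _ _]
  refine Finset.sum_nbij' (fun P => matAct (w : Mat4) P)
    (fun P => matAct ((↑w⁻¹ : Mat4)) P) ?_ ?_ ?_ ?_ ?_
  · intro P hP
    rw [Set.Finite.mem_toFinset] at hP ⊢
    obtain ⟨v, hv, rfl⟩ := hP
    exact ⟨v * w, mul_mem hv hw, by
      rw [Matrix.GeneralLinearGroup.coe_mul, ← matAct_matAct]⟩
  · intro P hP
    rw [Set.Finite.mem_toFinset] at hP ⊢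
    obtain ⟨v, hv, rfl⟩ := hP
    exact ⟨v * w⁻¹, mul_mem hv (inv_mem hw), by
      rw [Matrix.GeneralLinearGroup.coe_mul, ← matAct_matAct]⟩
  · intro P _; exact matAct_inv_cancel w P
  · intro P _
    have := matAct_inv_cancel w⁻¹ P
    rwa [inv_inv] at this
  · intro P _; rfl

lemma matAct_g (w : Matrix.GeneralLinearGroup (Fin 4) ℂ) (hw : w ∈ W1) :
    matAct (w : Mat4) g = g := by
  have h := matAct_mneg w hw
  have hnat : ∀ (n : ℕ) [n.AtLeastTwo],
      matAct (w : Mat4) (OfNat.ofNat n) = (OfNat.ofNat n : MvPolynomial (Fin 4) ℂ) :=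
    fun n _ => map_ofNat (aeval _) n
  simp only [g, matAct_sub', matAct_add', matAct_mul', hnat, h]

-- squaring transfer
lemma matAct_pow_two (M' M : Mat4)
    (h : ∀ i, (∑ j, C (M' i j) * X j : MvPolynomial (Fin 4) ℂ) ^ 2
        = ∑ j, C (M i j) * (X j : MvPolynomial (Fin 4) ℂ) ^ 2)
    (f : MvPolynomial (Fin 4) ℂ) :
    matAct M' (pow 2 f) = pow 2 (matAct M f) := by
  rw [matAct, pow, pow, matAct, aeval_aeval', aeval_aeval']
  have hfun : (fun i => aeval (fun i => ∑ j, C (M' i j) * X j)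
        ((X i : MvPolynomial (Fin 4) ℂ) ^ 2))
      = fun i => aeval (fun i => (X i : MvPolynomial (Fin 4) ℂ) ^ 2)
        (∑ j, C (M i j) * X j) := by
    funext i
    simp only [map_pow, aeval_X, map_sum, map_mul, aeval_C, algebraMap_eq]
    exact h i
  rw [hfun]

lemma sq1 : ∀ i, (∑ j, C (s1' i j) * X j : MvPolynomial (Fin 4) ℂ) ^ 2
    = ∑ j, C (s1 i j) * (X j : MvPolynomial (Fin 4) ℂ) ^ 2 := by
  intro i
  fin_cases i <;>
    simp [s1, s1', Fin.sum_univ_four, zeta4, mul_pow, ← C_pow, Complex.I_sq]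

lemma sq2 : ∀ i, (∑ j, C (s2' i j) * X j : MvPolynomial (Fin 4) ℂ) ^ 2
    = ∑ j, C (s2 i j) * (X j : MvPolynomial (Fin 4) ℂ) ^ 2 := by
  intro i
  fin_cases i <;>
    simp [s2, s2', Fin.sum_univ_four, zeta4, mul_pow, ← C_pow, Complex.I_sq]

lemma sq3 : ∀ i, (∑ j, C (s3' i j) * X j : MvPolynomial (Fin 4) ℂ) ^ 2
    = ∑ j, C (s3 i j) * (X j : MvPolynomial (Fin 4) ℂ) ^ 2 := by
  intro i
  fin_cases i <;>
    simp [s3, s3', Fin.sum_univ_four, zeta4, mul_pow, ← C_pow, Complex.I_sq]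

lemma s1_sq : s1 * s1 = 1 := by
  ext i j
  fin_cases i <;> fin_cases j <;>
    simp [s1, Matrix.mul_apply, Fin.sum_univ_four, Matrix.one_apply, Matrix.vecHead, Matrix.vecTail]

lemma s2_sq : s2 * s2 = 1 := by
  ext i j
  fin_cases i <;> fin_cases j <;>
    simp [s2, Matrix.mul_apply, Fin.sum_univ_four, Matrix.one_apply, Matrix.vecHead, Matrix.vecTail]

lemma s3_sq : s3 * s3 = 1 := by
  ext i j
  fin_cases i <;> fin_cases j <;>
    simp [s3, Matrix.mul_apply, Fin.sum_univ_four, Matrix.one_apply, Matrix.vecHead, Matrix.vecTail]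

def u1 : Matrix.GeneralLinearGroup (Fin 4) ℂ := ⟨s1, s1, s1_sq, s1_sq⟩
def u2 : Matrix.GeneralLinearGroup (Fin 4) ℂ := ⟨s2, s2, s2_sq, s2_sq⟩
def u3 : Matrix.GeneralLinearGroup (Fin 4) ℂ := ⟨s3, s3, s3_sq, s3_sq⟩

lemma hu1 : u1 ∈ W1 := Subgroup.subset_closure (Set.mem_insert _ _)
lemma hu2 : u2 ∈ W1 :=
  Subgroup.subset_closure (Set.mem_insert_iff.mpr (Or.inr (Set.mem_insert _ _)))
lemma hu3 : u3 ∈ W1 :=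
  Subgroup.subset_closure (Set.mem_insert_iff.mpr (Or.inr (Set.mem_insert_iff.mpr
    (Or.inr rfl))))


/-- the polynomial `g[2] = g(x₁², x₂², x₃², x₄²)` is invariant under the
action of `W₂`. -/
theorem stmt_3 : ∀ w ∈ W2, matAct (w : Mat4) (pow 2 g) = pow 2 g := by
  intro w hw
  induction hw using Subgroup.closure_induction with
  | mem w hw =>
    simp only [Set.mem_setOf_eq, Set.mem_insert_iff, Set.mem_singleton_iff] at hw
    rcases hw with h | h | h
    · rw [h, matAct_pow_two s1' s1 sq1, show matAct s1 g = g from matAct_g u1 hu1]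
    · rw [h, matAct_pow_two s2' s2 sq2, show matAct s2 g = g from matAct_g u2 hu2]
    · rw [h, matAct_pow_two s3' s3 sq3, show matAct s3 g = g from matAct_g u3 hu3]
  | one => simp [matAct_one]
  | mul u v hu hv ihu ihv =>
    rw [Matrix.GeneralLinearGroup.coe_mul, ← matAct_matAct, ihu, ihv]
  | inv u hu ihu =>
    conv_lhs => rw [← ihu]
    exact matAct_inv_cancel u (pow 2 g)
end
end

section
/- The group W₁ has order 48 and is isomorphic (as a group) to GL₂(𝔽₃), the general linear group of 2×2 invertible matrices over the field with 3 elements. -/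
noncomputable section

/-!
`GL₂(𝔽₃)` permutes the four lines of `𝔽₃²`. Choosing a nonzero vector `rᵢ` on each line turns
this into a representation `ρ` by signed permutation matrices: `(ρ g)ᵢⱼ = ±1` when `g rⱼ = ±rᵢ`.
It is faithful because `-1 ≠ 1` in `ℂ` and every nonzero vector is some `±rᵢ`. For a suitable
choice of the `rᵢ`, `ρ` sends three involutions of `GL₂(𝔽₃)` to `s₁, s₂, s₃`, and these
involutions generate `GL₂(𝔽₃)`, since transvections and invertible diagonal matrices are words
in them (Gaussian elimination). Hence `W₁` is the image of `ρ`, isomorphic to `GL₂(𝔽₃)`, of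
order `(9 - 1)(9 - 3) = 48`.
-/

open Matrix

section SignedPermutation

variable {V ι : Type*} [AddCommGroup V] [DecidableEq V] [DecidableEq ι]

structure IsSignTransversal (r : ι → V) : Prop where
  ne_neg : ∀ i, r i ≠ -r i
  eq_of_eq_or_eq_neg : ∀ i j, r i = r j ∨ r i = -r j → i = j
  exists_eq_or_eq_neg : ∀ v, v ≠ 0 → ∃ j, v = r j ∨ v = -r j

variable {R : Type*} [Ring R]

def signCoeff (v w : V) : R := if v = w then 1 else if v = -w then -1 else 0

theorem signCoeff_neg_left {w : V} (hw : w ≠ -w) (v : V) :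
    (signCoeff (-v) w : R) = -signCoeff v w := by
  unfold signCoeff
  split_ifs <;> simp_all [neg_eq_iff_eq_neg]

theorem signCoeff_zero_left {w : V} (hw : w ≠ -w) : (signCoeff 0 w : R) = 0 := by
  unfold signCoeff
  split_ifs <;> simp_all [eq_comm]

theorem signCoeff_eq_one_iff [CharZero R] {v w : V} : (signCoeff v w : R) = 1 ↔ v = w := by
  unfold signCoeff
  split_ifs <;> simp_all [neg_one_eq_one_iff]

theorem IsSignTransversal.signCoeff_eq {r : ι → V} (hr : IsSignTransversal r) (i j : ι) :
    (signCoeff (r j) (r i) : R) = if i = j then 1 else 0 := by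
  have h₁ := hr.eq_of_eq_or_eq_neg j i
  have h₂ := hr.ne_neg i
  unfold signCoeff
  split_ifs <;> grind

variable [Fintype ι] {M : Type*} [Monoid M] [DistribMulAction M V] {r : ι → V}

theorem IsSignTransversal.sum_signCoeff_mul_signCoeff (hr : IsSignTransversal r) (g : M)
    (i : ι) (v : V) :
    ∑ l, (signCoeff (g • r l) (r i) : R) * signCoeff v (r l) = signCoeff (g • v) (r i) := by
  have hneg (l : ι) (v : V) := signCoeff_neg_left (R := R) (hr.ne_neg l) v
  by_cases hv : v = 0
  · simp [hv, signCoeff_zero_left (hr.ne_neg _)]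
  obtain ⟨j, rfl | rfl⟩ := hr.exists_eq_or_eq_neg v hv
  · simp [hr.signCoeff_eq]
  · simp [hneg, hr.signCoeff_eq]

def signedPermRep (hr : IsSignTransversal r) : M →* Matrix ι ι R where
  toFun g := Matrix.of fun i j => signCoeff (g • r j) (r i)
  map_one' := by ext i j; simp [hr.signCoeff_eq, Matrix.one_apply]
  map_mul' g h := by ext i k; simp [Matrix.mul_apply, mul_smul, hr.sum_signCoeff_mul_signCoeff]

theorem IsSignTransversal.smul_eq_of_signedPermRep_eq_one [CharZero R]
    (hr : IsSignTransversal r) {g : M} (h : signedPermRep (R := R) hr g = 1) (v : V) :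
    g • v = v := by
  have hfix (j : ι) : g • r j = r j := by
    simpa [signedPermRep, signCoeff_eq_one_iff] using congrFun (congrFun h j) j
  by_cases hv : v = 0
  · simp [hv]
  obtain ⟨j, rfl | rfl⟩ := hr.exists_eq_or_eq_neg v hv <;> simp [hfix]

theorem IsSignTransversal.injective_units_map_signedPermRep [CharZero R] [FaithfulSMul M V]
    (hr : IsSignTransversal r) :
    Function.Injective (Units.map (signedPermRep (R := R) (M := M) hr)) := by
  refine (injective_iff_map_eq_one _).2 fun u hu => Units.ext ?_
  refine FaithfulSMul.eq_of_smul_eq_smul (α := V) fun v => ?_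
  simpa using hr.smul_eq_of_signedPermRep_eq_one (congrArg Units.val hu) v

end SignedPermutation

instance Matrix.faithfulSMul_mulVec {n K : Type*} [Fintype n] [DecidableEq n] [Semiring K] :
    FaithfulSMul (Matrix n n K) (n → K) :=
  ⟨Matrix.ext_iff_smul.2⟩

theorem Units.map_image_setOf_val_mem {M N : Type*} [Monoid M] [Monoid N] (f : M →* N)
    {S : Set M} (hS : ∀ x ∈ S, IsUnit x) :
    Units.map f '' {u | (u : M) ∈ S} = {w : Nˣ | (w : N) ∈ f '' S} := by
  ext w
  constructor
  · rintro ⟨u, hu, rfl⟩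
    exact ⟨u, hu, rfl⟩
  · rintro ⟨x, hx, hw⟩
    obtain ⟨u, rfl⟩ := hS x hx
    exact ⟨u, hx, Units.ext hw⟩

theorem Subgroup.closure_setOf_val_mem_eq_top {M : Type*} [Monoid M] {S : Set M}
    (hS : ∀ x ∈ S, IsUnit x) (h : ∀ u : Mˣ, (u : M) ∈ Submonoid.closure S) :
    Subgroup.closure {u : Mˣ | (u : M) ∈ S} = ⊤ := by
  have hle : Submonoid.closure S ≤
      (Subgroup.closure {u : Mˣ | (u : M) ∈ S}).toSubmonoid.map (Units.coeHom M) := by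
    rw [Submonoid.closure_le]
    intro x hx
    obtain ⟨u, rfl⟩ := hS x hx
    exact ⟨u, Subgroup.subset_closure hx, rfl⟩
  refine eq_top_iff.2 fun u _ => ?_
  obtain ⟨v, hv, hvu⟩ := hle (h u)
  rwa [← Units.ext hvu]

abbrev Mat2F3 := Matrix (Fin 2) (Fin 2) (ZMod 3)

def m1 : Mat2F3 := !![0, 1; 1, 0]
def m2 : Mat2F3 := !![1, -1; 0, -1]
def m3 : Mat2F3 := !![-1, 0; 0, 1]

def gl2Gens : Set Mat2F3 := {m1, m2, m3}

theorem isUnit_of_mem_gl2Gens {x : Mat2F3} (hx : x ∈ gl2Gens) : IsUnit x := by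
  have hinv : x * x = 1 := by rcases hx with rfl | rfl | rfl <;> decide
  exact .of_mul_eq_one x hinv

-- `e₁, e₂, -(e₁ + e₂), e₁ - e₂`: the order and the signs make `signedPermRepF3 mᵢ = sᵢ`.
def lineReps : Fin 4 → Fin 2 → ZMod 3 := ![![1, 0], ![0, 1], ![-1, -1], ![1, -1]]

theorem isSignTransversal_lineReps : IsSignTransversal lineReps :=
  ⟨by decide, by decide, by decide⟩

abbrev signedPermRepF3 : Mat2F3 →* Mat4 :=
  signedPermRep isSignTransversal_lineReps

theorem signedPermRepF3_image_gl2Gens : signedPermRepF3 '' gl2Gens = {s1, s2, s3} := by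
  have h1 : signedPermRepF3 m1 = s1 := by ext i j; fin_cases i <;> fin_cases j <;> rfl
  have h2 : signedPermRepF3 m2 = s2 := by ext i j; fin_cases i <;> fin_cases j <;> rfl
  have h3 : signedPermRepF3 m3 = s3 := by ext i j; fin_cases i <;> fin_cases j <;> rfl
  simp only [gl2Gens, Set.image_insert_eq, Set.image_singleton, h1, h2, h3]

theorem transvection_mem_closure_gl2Gens {i j : Fin 2} (hij : i ≠ j) (c : ZMod 3) :
    transvection i j c ∈ Submonoid.closure gl2Gens := by
  have h1 : m1 ∈ Submonoid.closure gl2Gens := Submonoid.subset_closure (by simp [gl2Gens])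
  have h2 : m2 ∈ Submonoid.closure gl2Gens := Submonoid.subset_closure (by simp [gl2Gens])
  have h3 : m3 ∈ Submonoid.closure gl2Gens := Submonoid.subset_closure (by simp [gl2Gens])
  have ht : transvection 0 1 (-1) ∈ Submonoid.closure gl2Gens := by
    rw [show transvection (0 : Fin 2) 1 (-1 : ZMod 3) = m1 * m3 * m1 * m2 by decide]
    exact mul_mem (mul_mem (mul_mem h1 h3) h1) h2
  have ht' (c : ZMod 3) : transvection 0 1 c ∈ Submonoid.closure gl2Gens := by
    obtain h | h | h : transvection (0 : Fin 2) 1 c = 1 ∨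
        transvection (0 : Fin 2) 1 c = transvection 0 1 (-1) ∨
        transvection (0 : Fin 2) 1 c = transvection 0 1 (-1) * transvection 0 1 (-1) := by
      decide +revert
    all_goals rw [h]
    exacts [one_mem _, ht, mul_mem ht ht]
  obtain ⟨rfl, rfl⟩ | ⟨rfl, rfl⟩ : i = 0 ∧ j = 1 ∨ i = 1 ∧ j = 0 := by decide +revert
  · exact ht' c
  · rw [show transvection 1 0 c = m1 * transvection 0 1 c * m1 by decide +revert]
    exact mul_mem (mul_mem h1 (ht' c)) h1

theorem diagonal_mem_closure_gl2Gens (D : Fin 2 → ZMod 3) (hD : (diagonal D).det ≠ 0) :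
    diagonal D ∈ Submonoid.closure gl2Gens := by
  have h1 : m1 ∈ Submonoid.closure gl2Gens := Submonoid.subset_closure (by simp [gl2Gens])
  have h3 : m3 ∈ Submonoid.closure gl2Gens := Submonoid.subset_closure (by simp [gl2Gens])
  rw [det_diagonal, Fin.prod_univ_two] at hD
  obtain h | h | h | h : diagonal D = 1 ∨ diagonal D = m3 ∨ diagonal D = m1 * m3 * m1 ∨
      diagonal D = m3 * (m1 * m3 * m1) := by
    decide +revert
  all_goals rw [h]
  exacts [one_mem _, h3, mul_mem (mul_mem h1 h3) h1, mul_mem h3 (mul_mem (mul_mem h1 h3) h1)]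

theorem mem_closure_gl2Gens_of_det_ne_zero (A : Mat2F3) (hA : A.det ≠ 0) :
    A ∈ Submonoid.closure gl2Gens :=
  diagonal_transvection_induction_of_det_ne_zero (· ∈ Submonoid.closure gl2Gens) A hA
    diagonal_mem_closure_gl2Gens (fun t => transvection_mem_closure_gl2Gens t.hij t.c)
    fun _ _ _ _ => mul_mem

theorem closure_gl2Gens_eq_top :
    Subgroup.closure {u : GL (Fin 2) (ZMod 3) | (u : Mat2F3) ∈ gl2Gens} = ⊤ :=
  Subgroup.closure_setOf_val_mem_eq_top (fun _ => isUnit_of_mem_gl2Gens) fun u =>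
    mem_closure_gl2Gens_of_det_ne_zero _ ((Matrix.isUnit_iff_isUnit_det _).mp u.isUnit).ne_zero

theorem range_units_map_signedPermRepF3 : (Units.map signedPermRepF3).range = W1 := by
  rw [MonoidHom.range_eq_map, ← closure_gl2Gens_eq_top, MonoidHom.map_closure,
    Units.map_image_setOf_val_mem _ fun _ => isUnit_of_mem_gl2Gens,
    signedPermRepF3_image_gl2Gens]
  rfl

/-- `W₁` has order 48 and is isomorphic to `GL₂(𝔽₃)`. -/
theorem stmt_12 :
    Nat.card W1 = 48 ∧
    Nonempty (W1 ≃* Matrix.GeneralLinearGroup (Fin 2) (ZMod 3)) := by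
  let e : W1 ≃* GL (Fin 2) (ZMod 3) :=
    (MulEquiv.subgroupCongr range_units_map_signedPermRepF3.symm).trans
      (MonoidHom.ofInjective isSignTransversal_lineReps.injective_units_map_signedPermRep).symm
  refine ⟨?_, ⟨e⟩⟩
  rw [Nat.card_congr e.toEquiv, Matrix.card_GL_field]
  simp [Fin.prod_univ_two, ZMod.card]
end
end

section
/- The quotient of the group W₁ by its center Z(W₁) is isomorphic to the symmetric group S₄ on four letters (in particular W₁/Z(W₁) has order 24). -/
noncomputable section

/-!
Conjugation by each generator permutes the coordinate projections `Eᵢ = single i i 1`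
(the generators are signed permutation matrices), so every element of `W₁` does, and this
defines a homomorphism `W₁ → S₄` sending `s₁, s₂, s₃` to the adjacent transpositions; it is
therefore onto. Its kernel consists of the diagonal elements of `W₁`. They preserve a quartic
form invariant under `W₁`, which no non-scalar diagonal matrix does, so the kernel is central.
Conversely the center of `W₁` maps into the center of `S₄`, which is trivial.
-/

open Equiv Function

namespace Units

variable {M ι : Type*} [Monoid M] (e : ι → M)

def conjPermSubgroup : Subgroup Mˣ where
  carrier := {g | ∃ σ : Perm ι, ∀ i, (g : M) * e i = e (σ i) * g}
  one_mem' := ⟨1, by simp⟩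
  mul_mem' := by
    rintro g h ⟨σ, hσ⟩ ⟨τ, hτ⟩
    exact ⟨σ * τ, fun i => by rw [val_mul, mul_assoc, hτ, ← mul_assoc, hσ, mul_assoc]; rfl⟩
  inv_mem' := by
    rintro g ⟨σ, hσ⟩
    refine ⟨σ⁻¹, fun i => ?_⟩
    rw [inv_mul_eq_iff_eq_mul, ← mul_assoc, hσ, Perm.coe_inv, apply_symm_apply, mul_inv_cancel_right]

variable {e}

theorem conjPermSubgroup.perm_unique (he : Injective e) {g : Mˣ} {σ τ : Perm ι}
    (hσ : ∀ i, (g : M) * e i = e (σ i) * g) (hτ : ∀ i, (g : M) * e i = e (τ i) * g) :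
    σ = τ :=
  Equiv.ext fun i => he <| (mul_left_inj g).1 <| (hσ i).symm.trans (hτ i)

def conjPermSubgroup.toPerm (he : Injective e) : conjPermSubgroup e →* Perm ι where
  toFun g := g.2.choose
  map_one' := perm_unique he (Subgroup.one_mem (conjPermSubgroup e)).choose_spec fun i => by simp
  map_mul' g h := perm_unique he (g * h).2.choose_spec fun i => by
    rw [Subgroup.coe_mul, val_mul, mul_assoc, h.2.choose_spec, ← mul_assoc, g.2.choose_spec,
      mul_assoc]
    rfl

theorem conjPermSubgroup.toPerm_eq (he : Injective e) {g : conjPermSubgroup e} {σ : Perm ι}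
    (hσ : ∀ i, ((g : Mˣ) : M) * e i = e (σ i) * (g : Mˣ)) : toPerm he g = σ :=
  perm_unique he g.2.choose_spec hσ

theorem conjPermSubgroup.toPerm_spec (he : Injective e) (g : conjPermSubgroup e) (i : ι) :
    ((g : Mˣ) : M) * e i = e (toPerm he g i) * (g : Mˣ) :=
  g.2.choose_spec i

end Units

theorem Equiv.Perm.center_eq_bot {α : Type*} (h : 3 ≤ Cardinal.mk α) :
    Subgroup.center (Perm α) = ⊥ := by
  classical
  refine (Subgroup.eq_bot_iff_forall _).2 fun σ hσ => Equiv.ext fun a => ?_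
  by_contra hne
  change σ a ≠ a at hne
  obtain ⟨c, hca, hcb⟩ := Cardinal.exists_ne_ne_of_three_le h a (σ a)
  have := congrArg (· a) (Subgroup.mem_center_iff.1 hσ (swap a c))
  rw [Perm.mul_apply, Perm.mul_apply, swap_apply_left, swap_apply_of_ne_of_ne hne hcb.symm] at this
  exact hca (σ.injective this.symm)

namespace Matrix

variable {n R : Type*} [DecidableEq n]

theorem injective_single_diag [NonAssocSemiring R] [Nontrivial R] :
    Injective fun i : n => single i i (1 : R) := fun i j h => by
  simpa [Pi.single_apply, eq_comm] using congrFun (congrArg diag h) i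

variable [Fintype n]

theorem mul_single_eq_single_mul [Semiring R] {M : Matrix n n R} (σ : Perm n)
    (hM : ∀ a b, a ≠ σ b → M a b = 0) (i : n) :
    M * single i i 1 = single (σ i) (σ i) 1 * M := by
  ext a b
  obtain rfl | hb := eq_or_ne b i
  · obtain rfl | ha := eq_or_ne a (σ b)
    · simp
    · simp [ha, hM a b ha]
  · obtain rfl | ha := eq_or_ne a (σ i)
    · simp [hb, hM _ b (σ.injective.ne hb.symm)]
    · simp [ha, hb]

theorem eq_diagonal_diag_of_commute_single [Semiring R] {M : Matrix n n R}
    (hM : ∀ i, Commute (single i i 1) M) : M = diagonal M.diag := by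
  ext a b
  obtain rfl | hab := eq_or_ne a b
  · simp
  · rw [diagonal_apply_ne _ hab, row_eq_zero_of_commute_single (hM a) hab.symm]

namespace GeneralLinearGroup

def invariantSubgroup [CommRing R] {Y : Type*} (F : (n → R) → Y) : Subgroup (GL n R) where
  carrier := {g | ∀ x, F ((g : Matrix n n R) *ᵥ x) = F x}
  one_mem' x := by simp
  mul_mem' {g h} hg hh x := by rw [Units.val_mul, ← mulVec_mulVec, hg, hh]
  inv_mem' {g} hg x := by rw [← hg, mulVec_mulVec, Units.mul_inv, one_mulVec]

end GeneralLinearGroup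

end Matrix

namespace W1

open Matrix Matrix.GeneralLinearGroup

abbrev lineProj (i : Fin 4) : Mat4 := single i i 1

def quartic (x : Fin 4 → ℂ) : ℂ :=
  - (x 1 * x 2 * x 3^2) - (x 1 * x 2^2 * x 3) + (x 1^2 * x 2 * x 3)
  - (x 0 * x 2 * x 3^2) + (x 0 * x 2^2 * x 3) - (x 0 * x 1 * x 3^2)
  + (x 0 * x 1 * x 2^2) - (x 0 * x 1^2 * x 3) + (x 0 * x 1^2 * x 2)
  - (x 0^2 * x 2 * x 3) + (x 0^2 * x 1 * x 3) + (x 0^2 * x 1 * x 2)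

def gen : Fin 3 → Mat4 := ![s1, s2, s3]

theorem gen_mul_self (k : Fin 3) : gen k * gen k = 1 := by
  ext a b
  fin_cases k <;> fin_cases a <;> fin_cases b <;>
    simp [gen, s1, s2, s3, mul_apply, Fin.sum_univ_four, one_apply]

theorem gen_apply_eq_zero (k : Fin 3) (a b : Fin 4) (h : a ≠ swap k.castSucc k.succ b) :
    gen k a b = 0 := by
  fin_cases k <;> fin_cases a <;> fin_cases b <;> simp_all [gen, s1, s2, s3, swap_apply_def]

theorem quartic_gen_mulVec (k : Fin 3) (x : Fin 4 → ℂ) : quartic (gen k *ᵥ x) = quartic x := by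
  fin_cases k <;>
    simp only [quartic, gen, s1, s2, s3, mulVec, dotProduct, Fin.sum_univ_four, Fin.zero_eta,
      Fin.mk_one, Fin.reduceFinMk, Fin.isValue, of_apply, cons_val', cons_val_fin_one, cons_val,
      cons_val_zero, cons_val_one] <;>
    ring

theorem le_conjPermSubgroup_inf_invariantSubgroup :
    W1 ≤ Units.conjPermSubgroup lineProj ⊓ invariantSubgroup quartic := by
  have key {w : GL (Fin 4) ℂ} (k : Fin 3) (hw : (w : Mat4) = gen k) :
      w ∈ Units.conjPermSubgroup lineProj ⊓ invariantSubgroup quartic := by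
    refine ⟨⟨swap k.castSucc k.succ, fun i => ?_⟩, fun x => ?_⟩
    · rw [hw]; exact mul_single_eq_single_mul _ (gen_apply_eq_zero k) i
    · rw [hw]; exact quartic_gen_mulVec k x
  rw [W1, Subgroup.closure_le]
  rintro w (hw | hw | hw)
  exacts [key 0 hw, key 1 hw, key 2 hw]

def genUnit (k : Fin 3) : GL (Fin 4) ℂ := ⟨gen k, gen k, gen_mul_self k, gen_mul_self k⟩

theorem genUnit_mem (k : Fin 3) : genUnit k ∈ W1 := by
  apply Subgroup.subset_closure
  fin_cases k
  exacts [Or.inl rfl, Or.inr (Or.inl rfl), Or.inr (Or.inr rfl)]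

def toPerm : W1 →* Perm (Fin 4) :=
  (Units.conjPermSubgroup.toPerm injective_single_diag).comp
    (Subgroup.inclusion (le_conjPermSubgroup_inf_invariantSubgroup.trans inf_le_left))

theorem toPerm_spec (w : W1) (i : Fin 4) :
    ((w : GL (Fin 4) ℂ) : Mat4) * lineProj i = lineProj (toPerm w i) * (w : GL (Fin 4) ℂ) :=
  Units.conjPermSubgroup.toPerm_spec injective_single_diag (Subgroup.inclusion _ w) i

theorem toPerm_genUnit (k : Fin 3) :
    toPerm ⟨genUnit k, genUnit_mem k⟩ = swap k.castSucc k.succ :=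
  Units.conjPermSubgroup.toPerm_eq injective_single_diag
    (mul_single_eq_single_mul _ (gen_apply_eq_zero k))

theorem toPerm_surjective : Surjective toPerm := by
  rw [← MonoidHom.range_eq_top, eq_top_iff,
    ← Subgroup.closure_eq_top_of_mclosure_eq_top (Perm.mclosure_swap_castSucc_succ 3),
    Subgroup.closure_le]
  rintro _ ⟨k, rfl⟩
  exact ⟨_, toPerm_genUnit k⟩

theorem eq_const_of_quartic_mul {d : Fin 4 → ℂ} (hd : ∀ x, quartic (d * x) = quartic x) :
    d = fun _ => d 0 := by
  have e1 := hd ![1, 1, 1, 0]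
  have e2 := hd ![-1, 1, 1, 0]
  have e3 := hd ![1, -1, 1, 0]
  have e4 := hd ![1, 1, -1, 0]
  have e5 := hd ![1, 1, 0, 1]
  have e6 := hd ![-1, 1, 0, 1]
  simp only [quartic, Pi.mul_apply, cons_val] at e1 e2 e3 e4 e5 e6
  -- the sums below isolate the monomials `x₀²x₁x₂`, `x₀x₁²x₂`, `x₀x₁x₂²`, `x₀²x₁x₃` of `quartic`
  have h0 : d 0 * d 1 * d 2 * d 0 = 1 := by linear_combination (e1 + e2) / 2
  have h1 : d 0 * d 1 * d 2 * d 1 = 1 := by linear_combination (e1 + e3) / 2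
  have h2 : d 0 * d 1 * d 2 * d 2 = 1 := by linear_combination (e1 + e4) / 2
  have h3 : d 0 * d 1 * d 0 * d 3 = 1 := by linear_combination (e5 + e6) / 2
  have h10 : d 1 = d 0 := mul_left_cancel₀ (left_ne_zero_of_mul_eq_one h0) (h1.trans h0.symm)
  have h20 : d 2 = d 0 := mul_left_cancel₀ (left_ne_zero_of_mul_eq_one h0) (h2.trans h0.symm)
  have h32 : d 3 = d 2 :=
    mul_left_cancel₀ (left_ne_zero_of_mul_eq_one h3) (h3.trans (by linear_combination -h0))
  funext i
  fin_cases i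
  exacts [rfl, h10, h20, h32.trans h20]

theorem center_le_ker_toPerm : Subgroup.center W1 ≤ toPerm.ker := by
  intro w hw
  have hcentral : toPerm w ∈ Subgroup.center (Perm (Fin 4)) :=
    Subgroup.mem_center_iff.2 fun τ => by
      obtain ⟨v, rfl⟩ := toPerm_surjective τ
      rw [← map_mul, ← map_mul, Subgroup.mem_center_iff.1 hw]
  rwa [Perm.center_eq_bot (by norm_num), Subgroup.mem_bot] at hcentral

theorem mem_center_of_toPerm_eq_one {w : W1} (hw : toPerm w = 1) : w ∈ Subgroup.center W1 := by
  set M : Mat4 := ((w : GL (Fin 4) ℂ) : Mat4) with hM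
  have hdiag : M = diagonal M.diag := eq_diagonal_diag_of_commute_single fun i => by
    have h := toPerm_spec w i
    rw [hw, Perm.one_apply] at h
    exact h.symm
  have hquartic (x : Fin 4 → ℂ) : quartic (M.diag * x) = quartic x := by
    have := (le_conjPermSubgroup_inf_invariantSubgroup w.2).2 x
    rwa [← hM, hdiag, funext (mulVec_diagonal _ _)] at this
  have hscalar : M = scalar (Fin 4) (M 0 0) := by
    rw [hdiag, eq_const_of_quartic_mul hquartic]
    rfl
  refine Subgroup.mem_center_iff.2 fun v => Subtype.ext (Units.ext ?_)
  change ((v : GL (Fin 4) ℂ) : Mat4) * M = M * (v : GL (Fin 4) ℂ)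
  rw [hscalar]
  exact (scalar_commute _ (fun _ => Commute.all _ _) _).symm

theorem ker_toPerm : toPerm.ker = Subgroup.center W1 :=
  le_antisymm (fun _ hw => mem_center_of_toPerm_eq_one hw) center_le_ker_toPerm

end W1

/-- `W₁ / Z(W₁)` is isomorphic to the symmetric group `S₄`
(in particular it has order 24). -/
theorem stmt_13 :
    Nonempty ((W1 ⧸ Subgroup.center W1) ≃* Equiv.Perm (Fin 4)) ∧
    Nat.card (W1 ⧸ Subgroup.center W1) = 24 := by
  have e : (W1 ⧸ Subgroup.center W1) ≃* Perm (Fin 4) :=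
    (QuotientGroup.quotientMulEquivOfEq W1.ker_toPerm.symm).trans
      (QuotientGroup.quotientKerEquivOfSurjective _ W1.toPerm_surjective)
  refine ⟨⟨e⟩, ?_⟩
  rw [Nat.card_congr e.toEquiv, Nat.card_perm, Nat.card_fin]
  rfl
end
end

section
/- Let φ₁ = 7·σ₁[2]⁴ − 72·σ₁[2]²·σ₂[2] + 4320·σ₄[2] + 432·σ₂[4], a homogeneous polynomial of degree 8 in ℂ[x₁,x₂,x₃,x₄]. Then the set of singular points of the projective surface Z(φ₁) ⊆ ℙ³(ℂ) has cardinality exactly 48, and every singular point of Z(φ₁) admits a homogeneous-coordinate representative lying in ℚ⁴. -/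
open MvPolynomial

noncomputable section

/-- `σᵢ[k]`: the `i`-th elementary symmetric polynomial in `x₁ᵏ, x₂ᵏ, x₃ᵏ, x₄ᵏ`. -/
def sig (i k : ℕ) : MvPolynomial (Fin 4) ℂ :=
  pow k (esymm (Fin 4) ℂ i)

/-- `φ₁ = 7σ₁[2]⁴ − 72σ₁[2]²σ₂[2] + 4320σ₄[2] + 432σ₂[4]`. -/
def phi1 : MvPolynomial (Fin 4) ℂ :=
  7 * sig 1 2 ^ 4 - 72 * sig 1 2 ^ 2 * sig 2 2 + 4320 * sig 4 2 + 432 * sig 2 4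

/-!
Write `aᵢ = xᵢ²` and `pₖ = ∑ⱼ aⱼᵏ`. Then `φ₁ = F(a)` with
`F = 151 p₁⁴ - 1044 p₁² p₂ + 756 p₂² + 1440 p₁ p₃ - 1296 p₄`, so `∂φ₁/∂xᵢ = 2 xᵢ (∂F/∂aᵢ)(a)`,
and `∂F/∂aᵢ` is one cubic in `aᵢ` whose coefficients are power sums of `a`. Since `φ₁` is
homogeneous, Euler's identity makes `x` singular exactly when every `aᵢ` is zero or a root of this
cubic. Zero coordinates do not contribute to power sums, so the condition passes to coordinate
hyperplanes, and explicit ideal-membership certificates show: four nonzero coordinates are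
impossible; of three nonzero ones, two coincide and the third is four times as large; one or two
nonzero coordinates are impossible. So the singular points are `(0, ±1, ±1, ±2)` up to
permutation and sign, `4 · 3 · 4 = 48` rational points.
-/

namespace MvPolynomial

variable {σ R : Type*} [CommSemiring R]

theorem isHomogeneous_psum [Fintype σ] (n : ℕ) : (psum σ R n).IsHomogeneous n :=
  IsHomogeneous.sum _ _ _ fun i _ => isHomogeneous_X_pow i n

theorem isHomogeneous_ofNat (n : ℕ) [n.AtLeastTwo] :
    (ofNat(n) : MvPolynomial σ R).IsHomogeneous 0 := by
  rw [← map_ofNat C]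
  exact isHomogeneous_C _ _

theorem pderiv_psum [Fintype σ] (i : σ) (n : ℕ) :
    pderiv i (psum σ R n) = (n : MvPolynomial σ R) * X i ^ (n - 1) := by
  classical
  simp [psum, pderiv_X, Pi.single_apply]

theorem pderiv_ofNat (i : σ) (n : ℕ) [n.AtLeastTwo] :
    pderiv i (ofNat(n) : MvPolynomial σ R) = 0 := by
  rw [← Nat.cast_ofNat, Derivation.map_natCast]

end MvPolynomial

theorem mem_singPts_iff_of_isHomogeneous {f : MvPolynomial (Fin 4) ℂ} {n : ℕ}
    (hf : f.IsHomogeneous n) (hn : n ≠ 0) (x : Projectivization ℂ (Fin 4 → ℂ)) :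
    x ∈ SingPts f ↔ ∀ i, eval x.rep (pderiv i f) = 0 := by
  refine ⟨And.right, fun h => ⟨?_, h⟩⟩
  have euler := congrArg (eval x.rep) hf.sum_X_mul_pderiv
  simp only [map_sum, eval_mul, eval_X, h, mul_zero, Finset.sum_const_zero, nsmul_eq_mul,
    map_natCast] at euler
  exact (mul_eq_zero.mp euler.symm).resolve_left (by exact_mod_cast hn)

theorem exists_eq_mul_of_sq_eq_mul_sq {K ι : Type*} [Field K] [IsAlgClosed K] {v : ι → K} {s : K}
    {q : ι → ℤ} (h : ∀ j, v j ^ 2 = s * (q j : K) ^ 2) :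
    ∃ r : K, ∃ w : ι → ℤ, (∀ j, w j = q j ∨ w j = -q j) ∧ ∀ j, v j = r * w j := by
  classical
  obtain ⟨r, hr⟩ := IsAlgClosed.exists_pow_nat_eq s two_pos
  refine ⟨r, fun j => if v j = r * q j then q j else -q j,
    fun j => by dsimp only; split_ifs <;> simp, fun j => ?_⟩
  have hsq : v j ^ 2 = (r * q j) ^ 2 := by rw [h, mul_pow, hr]
  dsimp only
  split_ifs with hj
  · exact hj
  · rw [(sq_eq_sq_iff_eq_or_eq_neg.mp hsq).resolve_left hj]
    push_cast
    ring

theorem eq_or_eq_neg_of_mul_intCast_eq {K ι : Type*} [Field K] [CharZero K] [Fintype ι]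
    {q q' : ι → ℤ} (hsq : ∑ i, q i ^ 2 = ∑ i, q' i ^ 2) (hne : ∑ i, q' i ^ 2 ≠ 0) {t : K}
    (ht : ∀ i, t * q' i = q i) : q = q' ∨ q = -q' := by
  have ht2 : t ^ 2 * ((∑ i, q' i ^ 2 : ℤ) : K) = ((∑ i, q' i ^ 2 : ℤ) : K) := by
    push_cast
    simp only [Finset.mul_sum, ← mul_pow, ht]
    exact_mod_cast hsq
  rcases sq_eq_one_iff.mp ((mul_eq_right₀ (by exact_mod_cast hne)).mp ht2) with rfl | rfl
  · exact Or.inl (funext fun i => Int.cast_injective (α := K) (by simpa using (ht i).symm))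
  · exact Or.inr (funext fun i => Int.cast_injective (α := K) (by simpa using (ht i).symm))

namespace Phi1

def powerSum {R ι : Type*} [CommRing R] [Fintype ι] (a : ι → R) (k : ℕ) : R := ∑ j, a j ^ k

/-- `(∂F/∂aᵢ)(a)` for `t = aᵢ` and the quartic `F` in power sums above, computed as
`∂F/∂p₁ + 2 t ∂F/∂p₂ + 3 t² ∂F/∂p₃ + 4 t³ ∂F/∂p₄`. -/
def dF {R ι : Type*} [CommRing R] [Fintype ι] (a : ι → R) (t : R) : R :=
  604 * powerSum a 1 ^ 3 - 2088 * powerSum a 1 * powerSum a 2 + 1440 * powerSum a 3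
    + (3024 * powerSum a 2 - 2088 * powerSum a 1 ^ 2) * t + 4320 * powerSum a 1 * t ^ 2
    - 5184 * t ^ 3

def IsSingularSq {R ι : Type*} [CommRing R] [Fintype ι] (a : ι → R) : Prop :=
  ∀ i, a i = 0 ∨ dF a (a i) = 0

section CommRing

variable {R ι : Type*} [CommRing R] [Fintype ι]

theorem dF_map {S : Type*} [CommRing S] (f : R →+* S) (a : ι → R) (t : R) :
    dF (fun j => f (a j)) (f t) = f (dF a t) := by
  simp [dF, powerSum, map_sum, map_ofNat]

theorem IsSingularSq.map {S : Type*} [CommRing S] {a : ι → R} (h : IsSingularSq a) (f : R →+* S) :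
    IsSingularSq (fun j => f (a j)) := fun i => by
  rw [dF_map]
  exact (h i).imp (fun h => by simp [h]) (fun h => by simp [h])

theorem dF_const_mul (c : R) (a : ι → R) (t : R) :
    dF (fun j => c * a j) (c * t) = c ^ 3 * dF a t := by
  simp only [dF, powerSum, mul_pow, ← Finset.mul_sum]
  ring

theorem IsSingularSq.const_mul {a : ι → R} (h : IsSingularSq a) (c : R) :
    IsSingularSq (fun j => c * a j) := fun i => by
  rw [dF_const_mul]
  exact (h i).imp (fun h => by simp [h]) (fun h => by simp [h])

theorem dF_removeNth {n : ℕ} {a : Fin (n + 1) → R} {i : Fin (n + 1)} (hi : a i = 0) (t : R) :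
    dF (i.removeNth a) t = dF a t := by
  simp only [dF, powerSum, Fin.sum_univ_succAbove _ i, hi, Fin.removeNth]
  simp

theorem IsSingularSq.removeNth {n : ℕ} {a : Fin (n + 1) → R} (h : IsSingularSq a) {i : Fin (n + 1)}
    (hi : a i = 0) : IsSingularSq (i.removeNth a) := fun j => by
  rw [dF_removeNth hi]
  exact h _

theorem IsSingularSq.eq_zero_of_apply_eq_zero {n : ℕ}
    (hn : ∀ b : Fin n → R, IsSingularSq b → b = 0) {a : Fin (n + 1) → R} (h : IsSingularSq a)
    {i : Fin (n + 1)} (hi : a i = 0) : a = 0 := by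
  rw [← Fin.insertNth_self_removeNth i a, hi, hn _ (h.removeNth hi)]
  ext j
  cases j using Fin.succAboveCases i <;> simp

/- The multipliers of the following three certificates solve a linear system for polynomials in
`a i` and the power sums of `a`. -/
theorem sum_mul_dF_fin_four (a : Fin 4 → R) :
    ∑ i, ((6687 * powerSum a 1 ^ 5 - 45001 * powerSum a 1 ^ 3 * powerSum a 2
        + 27736 * powerSum a 1 * powerSum a 2 ^ 2 + 64561 * powerSum a 1 ^ 2 * powerSum a 3
        + 3834 * powerSum a 2 * powerSum a 3 - 57432 * powerSum a 1 * powerSum a 4)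
      + (-9698 * powerSum a 1 ^ 2 * powerSum a 2 + 5166 * powerSum a 2 ^ 2
        + 18568 * powerSum a 1 * powerSum a 3 - 13776 * powerSum a 4) * a i
      + (11996 * powerSum a 1 * powerSum a 2 - 8448 * powerSum a 3) * a i ^ 2
      + (3444 * powerSum a 2 - 5822 * powerSum a 1 ^ 2) * a i ^ 3) * dF a (a i)
      = 1142636544 * (∏ i, a i) ^ 2 := by
  simp only [dF, powerSum, Fin.sum_univ_four, Fin.prod_univ_four]
  ring

theorem sum_mul_dF_fin_three (a : Fin 3 → R) :
    ∑ i, ((21 * powerSum a 1 ^ 3 - 86 * powerSum a 1 * powerSum a 2 + 72 * powerSum a 3)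
      + (24 * powerSum a 2 - 9 * powerSum a 1 ^ 2) * a i) * dF a (a i)
      = 20736 * ((a 0 - a 1) * (a 1 - a 2) * (a 2 - a 0)) ^ 2 := by
  simp only [dF, powerSum, Fin.sum_univ_three]
  ring

theorem sum_mul_dF_fin_two (a : Fin 2 → R) :
    ∑ i, ((187 * powerSum a 1 ^ 3 - 222 * powerSum a 1 * powerSum a 2)
      + (364 * powerSum a 1 ^ 2 - 384 * powerSum a 2) * a i) * dF a (a i)
      = 1327104 * (a 0 * a 1) ^ 3 := by
  simp only [dF, powerSum, Fin.sum_univ_two]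
  ring

theorem dF_vecCons_rotate (x y z : R) : dF ![x, y, z] = dF ![y, z, x] := by
  funext t
  simp only [dF, powerSum, Fin.sum_univ_three, Matrix.cons_val_zero, Matrix.cons_val_one,
    Matrix.cons_val_two, Matrix.tail_cons, Matrix.head_cons]
  ring

end CommRing

def oneOneTwoPerms : Finset (Fin 3 → ℤ) := {![1, 1, 2], ![1, 2, 1], ![2, 1, 1]}

section IsDomain

variable {R : Type*} [CommRing R] [IsDomain R] [CharZero R]

theorem IsSingularSq.eq_zero_of_fin_one {a : Fin 1 → R} (h : IsSingularSq a) : a = 0 := by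
  have key : dF a (a 0) = 28 * a 0 ^ 3 := by
    simp only [dF, powerSum, Fin.sum_univ_one]
    ring
  ext i
  rw [Fin.fin_one_eq_zero i]
  simpa [key] using h 0

theorem IsSingularSq.eq_zero_of_fin_two {a : Fin 2 → R} (h : IsSingularSq a) : a = 0 := by
  by_cases hz : ∃ i, a i = 0
  · obtain ⟨i, hi⟩ := hz
    exact h.eq_zero_of_apply_eq_zero (fun b hb => hb.eq_zero_of_fin_one) hi
  push Not at hz
  have key := sum_mul_dF_fin_two a
  rw [Finset.sum_eq_zero fun i _ => by rw [(h i).resolve_left (hz i), mul_zero]] at key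
  simp [hz 0, hz 1] at key

theorem eq_four_mul_of_dF_eq_zero {x z : R} (hx : x ≠ 0) (h₁ : dF ![x, x, z] x = 0)
    (h₂ : dF ![x, x, z] z = 0) : z = 4 * x := by
  have key : 7 * dF ![x, x, z] x + 11 * dF ![x, x, z] z = -216 * x * (z - 4 * x) ^ 2 := by
    simp only [dF, powerSum, Fin.sum_univ_three, Matrix.cons_val_zero, Matrix.cons_val_one,
      Matrix.cons_val_two, Matrix.tail_cons, Matrix.head_cons]
    ring
  rw [h₁, h₂] at key
  have : z - 4 * x = 0 := by simpa [hx] using key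
  linear_combination this

theorem IsSingularSq.exists_eq_mul_sq_of_fin_three {a : Fin 3 → R} (h : IsSingularSq a) :
    ∃ s : R, ∃ m ∈ oneOneTwoPerms, ∀ j, a j = s * (m j : R) ^ 2 := by
  by_cases hz : ∃ i, a i = 0
  · obtain ⟨i, hi⟩ := hz
    refine ⟨0, ![1, 1, 2], by decide, fun j => ?_⟩
    simp [h.eq_zero_of_apply_eq_zero (fun b hb => hb.eq_zero_of_fin_two) hi]
  push Not at hz
  have hd i : dF a (a i) = 0 := (h i).resolve_left (hz i)
  have key := sum_mul_dF_fin_three a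
  rw [Finset.sum_eq_zero fun i _ => by rw [hd i, mul_zero]] at key
  obtain ⟨x, y, z, rfl⟩ : ∃ x y z, a = ![x, y, z] := ⟨a 0, a 1, a 2, by ext j; fin_cases j <;> rfl⟩
  have hx : x ≠ 0 := hz 0
  have hy : y ≠ 0 := hz 1
  have h₀ : dF ![x, y, z] x = 0 := hd 0
  have h₁ : dF ![x, y, z] y = 0 := hd 1
  have h₂ : dF ![x, y, z] z = 0 := hd 2
  have hdisc : (x - y) * (y - z) * (z - x) = 0 := by
    simpa using key.symm
  rcases mul_eq_zero.mp hdisc with hdisc | hzx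
  · rcases mul_eq_zero.mp hdisc with hxy | hyz
    · obtain rfl : x = y := sub_eq_zero.mp hxy
      obtain rfl := eq_four_mul_of_dF_eq_zero hx h₀ h₂
      exact ⟨x, ![1, 1, 2], by decide, fun j => by fin_cases j <;> norm_num [mul_comm]⟩
    · obtain rfl : y = z := sub_eq_zero.mp hyz
      rw [dF_vecCons_rotate] at h₀ h₁
      obtain rfl := eq_four_mul_of_dF_eq_zero hy h₁ h₀
      exact ⟨y, ![2, 1, 1], by decide, fun j => by fin_cases j <;> norm_num [mul_comm]⟩
  · obtain rfl : z = x := sub_eq_zero.mp hzx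
    rw [dF_vecCons_rotate, dF_vecCons_rotate] at h₀ h₁
    obtain rfl := eq_four_mul_of_dF_eq_zero hx h₀ h₁
    exact ⟨z, ![1, 2, 1], by decide, fun j => by fin_cases j <;> norm_num [mul_comm]⟩

theorem IsSingularSq.exists_apply_eq_zero_of_fin_four {a : Fin 4 → R} (h : IsSingularSq a) :
    ∃ i, a i = 0 := by
  by_contra! hz
  have key := sum_mul_dF_fin_four a
  rw [Finset.sum_eq_zero fun i _ => by rw [(h i).resolve_left (hz i), mul_zero]] at key
  simp [Finset.prod_ne_zero_iff.mpr fun i _ => hz i] at key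

theorem IsSingularSq.exists_eq_mul_sq_of_fin_four {a : Fin 4 → R} (h : IsSingularSq a) :
    ∃ s : R, ∃ i : Fin 4, ∃ m ∈ oneOneTwoPerms,
      ∀ j, a j = s * ((i.insertNth 0 m : Fin 4 → ℤ) j : R) ^ 2 := by
  obtain ⟨i, hi⟩ := h.exists_apply_eq_zero_of_fin_four
  obtain ⟨s, m, hm, hs⟩ := (h.removeNth hi).exists_eq_mul_sq_of_fin_three
  refine ⟨s, i, m, hm, fun j => ?_⟩
  rcases Fin.eq_self_or_eq_succAbove i j with rfl | ⟨k, rfl⟩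
  · simp [hi]
  · simpa [Fin.removeNth] using hs k

end IsDomain

theorem esymm_fin_four_two : esymm (Fin 4) ℂ 2 =
    X 0 * X 1 + X 0 * X 2 + X 0 * X 3 + X 1 * X 2 + X 1 * X 3 + X 2 * X 3 := by
  rw [esymm, show Finset.powersetCard 2 (Finset.univ : Finset (Fin 4)) =
    {{0, 1}, {0, 2}, {0, 3}, {1, 2}, {1, 3}, {2, 3}} by decide]
  simp +decide [Finset.sum_insert, Finset.prod_insert]
  ring

theorem esymm_fin_four_four : esymm (Fin 4) ℂ 4 = X 0 * X 1 * X 2 * X 3 := by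
  rw [esymm, show Finset.powersetCard 4 (Finset.univ : Finset (Fin 4)) = {Finset.univ} by decide]
  simp [Fin.prod_univ_four]

theorem phi1_eq_psum : phi1 = 151 * psum (Fin 4) ℂ 2 ^ 4
    - 1044 * psum (Fin 4) ℂ 2 ^ 2 * psum (Fin 4) ℂ 4 + 756 * psum (Fin 4) ℂ 4 ^ 2
    + 1440 * psum (Fin 4) ℂ 2 * psum (Fin 4) ℂ 6 - 1296 * psum (Fin 4) ℂ 8 := by
  simp only [phi1, sig, pow, esymm_one, esymm_fin_four_two, esymm_fin_four_four, psum,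
    Fin.sum_univ_four, map_add, map_mul, aeval_X]
  ring

theorem isHomogeneous_phi1 : phi1.IsHomogeneous 8 := by
  have h := isHomogeneous_psum (σ := Fin 4) (R := ℂ)
  have c := isHomogeneous_ofNat (σ := Fin 4) (R := ℂ)
  rw [phi1_eq_psum]
  exact (((((c 151).mul ((h 2).pow 4)).sub (((c 1044).mul ((h 2).pow 2)).mul (h 4))).add
    ((c 756).mul ((h 4).pow 2))).add (((c 1440).mul (h 2)).mul (h 6))).sub ((c 1296).mul (h 8))

theorem eval_pderiv_phi1 (v : Fin 4 → ℂ) (i : Fin 4) :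
    eval v (pderiv i phi1) = 2 * v i * dF (fun j => v j ^ 2) (v i ^ 2) := by
  rw [phi1_eq_psum]
  simp only [map_add, map_sub, Derivation.leibniz, Derivation.leibniz_pow, pderiv_psum,
    pderiv_ofNat, smul_eq_mul, nsmul_eq_mul, eval_mul, eval_pow, eval_X, map_natCast, map_ofNat,
    map_zero]
  simp only [psum, map_sum, eval_pow, eval_X, dF, powerSum, ← pow_mul]
  push_cast
  ring

theorem mem_singPts_phi1_iff (x : Projectivization ℂ (Fin 4 → ℂ)) :
    x ∈ SingPts phi1 ↔ IsSingularSq (fun j => x.rep j ^ 2) := by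
  rw [mem_singPts_iff_of_isHomogeneous isHomogeneous_phi1 (by norm_num)]
  refine forall_congr' fun i => ?_
  simp [eval_pderiv_phi1]

/-- One representative of each singular point, with first nonzero coordinate positive. -/
def singularReps : Finset (Fin 4 → ℤ) :=
  {![0, 1, 1, 2], ![0, 1, 1, -2], ![0, 1, -1, 2], ![0, 1, -1, -2],
   ![0, 1, 2, 1], ![0, 1, -2, 1], ![0, 1, 2, -1], ![0, 1, -2, -1],
   ![0, 2, 1, 1], ![0, 2, -1, -1], ![0, 2, 1, -1], ![0, 2, -1, 1],
   ![1, 0, 1, 2], ![1, 0, 1, -2], ![1, 0, -1, 2], ![1, 0, -1, -2],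
   ![1, 0, 2, 1], ![1, 0, -2, 1], ![1, 0, 2, -1], ![1, 0, -2, -1],
   ![2, 0, 1, 1], ![2, 0, -1, -1], ![2, 0, 1, -1], ![2, 0, -1, 1],
   ![1, 1, 0, 2], ![1, 1, 0, -2], ![1, -1, 0, 2], ![1, -1, 0, -2],
   ![1, 2, 0, 1], ![1, -2, 0, 1], ![1, 2, 0, -1], ![1, -2, 0, -1],
   ![2, 1, 0, 1], ![2, -1, 0, -1], ![2, 1, 0, -1], ![2, -1, 0, 1],
   ![1, 1, 2, 0], ![1, 1, -2, 0], ![1, -1, 2, 0], ![1, -1, -2, 0],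
   ![1, 2, 1, 0], ![1, -2, 1, 0], ![1, 2, -1, 0], ![1, -2, -1, 0],
   ![2, 1, 1, 0], ![2, -1, -1, 0], ![2, 1, -1, 0], ![2, -1, 1, 0]}

set_option maxRecDepth 10000 in
theorem card_singularReps : singularReps.card = 48 := by decide

set_option maxRecDepth 10000 in
theorem isSingularSq_of_mem_singularReps :
    ∀ q ∈ singularReps, IsSingularSq (fun i => q i ^ 2) := by
  unfold IsSingularSq
  decide

set_option maxRecDepth 10000 in
theorem sum_sq_of_mem_singularReps : ∀ q ∈ singularReps, ∑ i, q i ^ 2 = 6 := by decide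

set_option maxRecDepth 10000 in
theorem neg_notMem_singularReps : ∀ q ∈ singularReps, -q ∉ singularReps := by decide

set_option maxRecDepth 10000 in
theorem mem_or_neg_mem_singularReps :
    ∀ i : Fin 4, ∀ m ∈ oneOneTwoPerms, ∀ w ∈ Fintype.piFinset fun j =>
      ({(i.insertNth 0 m : Fin 4 → ℤ) j, -(i.insertNth 0 m : Fin 4 → ℤ) j} : Finset ℤ),
      w ∈ singularReps ∨ -w ∈ singularReps := by
  decide

theorem intCast_ne_zero_of_mem_singularReps {q : Fin 4 → ℤ} (hq : q ∈ singularReps) :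
    (fun i => (q i : ℂ)) ≠ 0 := by
  intro h
  have hq0 : q = 0 := funext fun i => by simpa using congrFun h i
  simpa [hq0] using sum_sq_of_mem_singularReps q hq

def singularPoint (q : singularReps) : Projectivization ℂ (Fin 4 → ℂ) :=
  Projectivization.mk ℂ (fun i => (q.1 i : ℂ)) (intCast_ne_zero_of_mem_singularReps q.2)

theorem singularPoint_mem_singPts (q : singularReps) : singularPoint q ∈ SingPts phi1 := by
  rw [mem_singPts_phi1_iff]
  obtain ⟨u, hu⟩ := Projectivization.exists_smul_eq_mk_rep ℂ _
    (intCast_ne_zero_of_mem_singularReps q.2)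
  have h := ((isSingularSq_of_mem_singularReps q.1 q.2).map (Int.castRingHom ℂ)).const_mul
    ((u : ℂ) ^ 2)
  convert h using 2 with j
  simp [singularPoint, ← hu, Units.smul_def, mul_pow]

theorem singularPoint_injective : Function.Injective singularPoint := by
  rintro ⟨q, hq⟩ ⟨q', hq'⟩ h
  obtain ⟨t, ht⟩ := (Projectivization.mk_eq_mk_iff' ℂ _ _ _ _).mp h
  rcases eq_or_eq_neg_of_mul_intCast_eq
    ((sum_sq_of_mem_singularReps q hq).trans (sum_sq_of_mem_singularReps q' hq').symm)
    (by rw [sum_sq_of_mem_singularReps q' hq']; norm_num) (fun i => congrFun ht i) with rfl | rfl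
  · rfl
  · exact absurd hq (neg_notMem_singularReps q' hq')

theorem singularPoint_eq_of_rep_eq {x : Projectivization ℂ (Fin 4 → ℂ)} {w : Fin 4 → ℤ}
    (hw : w ∈ singularReps) {r : ℂ} (h : ∀ j, x.rep j = r * w j) : singularPoint ⟨w, hw⟩ = x :=
  ((Projectivization.mk_eq_mk_iff' ℂ _ _ x.rep_nonzero _).mpr
    ⟨r, funext fun j => by simp [h]⟩).symm.trans x.mk_rep

theorem range_singularPoint : Set.range singularPoint = SingPts phi1 := by
  refine Set.Subset.antisymm (Set.range_subset_iff.mpr singularPoint_mem_singPts) fun x hx => ?_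
  rw [mem_singPts_phi1_iff] at hx
  obtain ⟨s, i, m, hm, hs⟩ := hx.exists_eq_mul_sq_of_fin_four
  obtain ⟨r, w, hw, hrw⟩ := exists_eq_mul_of_sq_eq_mul_sq hs
  rcases mem_or_neg_mem_singularReps i m hm w (Fintype.mem_piFinset.mpr fun j => by
    rcases hw j with h | h <;> simp [h]) with hmem | hmem
  · exact ⟨_, singularPoint_eq_of_rep_eq hmem hrw⟩
  · exact ⟨_, singularPoint_eq_of_rep_eq hmem (r := -r) fun j => by simp [hrw]⟩

end Phi1

/-- `Z(φ₁) ⊆ ℙ³(ℂ)` has exactly 48 singular points, and each of them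
has a homogeneous-coordinate representative with rational coordinates. -/
theorem stmt_16 :
    (SingPts phi1).ncard = 48 ∧
    ∀ x ∈ SingPts phi1, ∃ (q : Fin 4 → ℚ) (h : (fun i => (q i : ℂ)) ≠ 0),
      x = Projectivization.mk ℂ (fun i => (q i : ℂ)) h := by
  rw [← Phi1.range_singularPoint]
  refine ⟨?_, ?_⟩
  · rw [Set.ncard_range_of_injective Phi1.singularPoint_injective, Nat.card_eq_fintype_card,
      Fintype.card_coe, Phi1.card_singularReps]
  · rintro _ ⟨q, rfl⟩
    have hq : (fun i => ((q.1 i : ℚ) : ℂ)) = fun i => (q.1 i : ℂ) :=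
      funext fun i => Rat.cast_intCast _
    exact ⟨fun i => q.1 i, hq ▸ Phi1.intCast_ne_zero_of_mem_singularReps q.2,
      by simp only [Phi1.singularPoint, hq]⟩
end
end
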